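/- Let G be a signed graph with no induced subgraph isomorphic to an unbalanced triangle, and let G̃=(G⁺∪G⁻, G⁺∩G⁻). If a vertex v is link simplicial in G̃, then v is link simplicial in G. -/

import Mathlib

open scoped Classical

universe u v

/-! ## Signed graphs -/

/-- A signed graph: a pair of simple graphs (positive and negative parts) on a common
vertex set. -/
structure SignedGraph (V : Type u) where
  pos : SimpleGraph V
  neg : SimpleGraph V

namespace SignedGraph

variable {V : Type u}

/-- Adjacency by an edge of a given sign (`true` = negative edge, `false` = positive edge). -/
def EdgeAdj (G : SignedGraph V) (s : Bool) (u v : V) : Prop :=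
  cond s (G.neg.Adj u v) (G.pos.Adj u v)

/-- A cycle of a signed graph: distinct vertices `vert 0, …, vert (n-1)` (`n ≥ 3`) with an
edge of sign `sgn i` between `vert i` and `vert ((i+1) % n)` for each `i < n`. -/
structure Cycle (G : SignedGraph V) where
  n : ℕ
  three_le : 3 ≤ n
  vert : ℕ → V
  inj : ∀ i j, i < n → j < n → vert i = vert j → i = j
  sgn : ℕ → Bool
  adj : ∀ i, i < n → G.EdgeAdj (sgn i) (vert i) (vert ((i + 1) % n))

/-- A cycle is balanced if it uses an even number of negative edges. -/
def Cycle.Balanced {G : SignedGraph V} (C : G.Cycle) : Prop :=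
  Even (((Finset.range C.n).filter fun i => C.sgn i = true).card)

/-- A chord of a cycle: an edge of `G` joining two non-consecutive vertices of the cycle. -/
def Cycle.IsChord {G : SignedGraph V} (C : G.Cycle) (i j : ℕ) : Prop :=
  i < C.n ∧ j < C.n ∧ i ≠ j ∧ j ≠ (i + 1) % C.n ∧ i ≠ (j + 1) % C.n ∧
    (G.pos.Adj (C.vert i) (C.vert j) ∨ G.neg.Adj (C.vert i) (C.vert j))

/-- The chord of sign `s` between positions `i < j` of the cycle `C` separates `C` into two
balanced cycles (for a balanced cycle it suffices that one of the two pieces is balanced). -/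
def Cycle.BalancedChordAt {G : SignedGraph V} (C : G.Cycle) (i j : ℕ) (s : Bool) : Prop :=
  i < j ∧ C.IsChord i j ∧ G.EdgeAdj s (C.vert i) (C.vert j) ∧
    Even ((((Finset.Ico i j).filter fun k => C.sgn k = true).card) + cond s 1 0) ∧
    Even ((((Finset.range C.n \ Finset.Ico i j).filter fun k => C.sgn k = true).card)
      + cond s 1 0)

/-- The cycle has a balanced chord. -/
def Cycle.HasBalancedChord {G : SignedGraph V} (C : G.Cycle) : Prop :=
  ∃ i j s, C.BalancedChordAt i j s

/-- Condition (I): a signed graph is balanced chordal if every balanced cycle of length at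
least four has a balanced chord. -/
def BalancedChordal (G : SignedGraph V) : Prop :=
  ∀ C : G.Cycle, 4 ≤ C.n → C.Balanced → C.HasBalancedChord

/-- The cycle `C` is an induced subgraph of `G`: the only edges of `G` among its vertices are
the edges of the cycle, each single, with the sign it has in the cycle. -/
def Cycle.IsInduced {G : SignedGraph V} (C : G.Cycle) : Prop :=
  ∀ i j, i < C.n → j < C.n → ∀ s : Bool,
    (G.EdgeAdj s (C.vert i) (C.vert j) ↔
      ((j = (i + 1) % C.n ∧ C.sgn i = s) ∨ (i = (j + 1) % C.n ∧ C.sgn j = s)))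

/-- Condition (II): no induced subgraph of `G` is an unbalanced cycle (of length `≥ 3`). -/
def NoInducedUnbalancedCycle (G : SignedGraph V) : Prop :=
  ¬ ∃ C : G.Cycle, C.IsInduced ∧ ¬ C.Balanced

/-- Switching a signed graph by `ν : V → Bool`. -/
def switch (G : SignedGraph V) (ν : V → Bool) : SignedGraph V where
  pos := SimpleGraph.fromRel fun u w => if ν u = ν w then G.pos.Adj u w else G.neg.Adj u w
  neg := SimpleGraph.fromRel fun u w => if ν u = ν w then G.neg.Adj u w else G.pos.Adj u w

/-- `G` contains an induced copy of the signed graph `H`. -/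
def HasInducedCopy {W : Type v} (G : SignedGraph V) (H : SignedGraph W) : Prop :=
  ∃ f : W → V, Function.Injective f ∧
    (∀ a b : W, G.pos.Adj (f a) (f b) ↔ H.pos.Adj a b) ∧
    (∀ a b : W, G.neg.Adj (f a) (f b) ↔ H.neg.Adj a b)

end SignedGraph

/-- The obstruction graph `G₀` of Figure 1: vertices `0,1,2,3` (= `1,2,3,4` in the paper),
double edges `{0,1}, {2,3}`, positive single edges `{0,3}, {1,3}, {1,2}`, negative single
edge `{0,2}`. -/
def obstruction : SignedGraph (Fin 4) where
  pos := SimpleGraph.fromRel fun a b =>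
    (a = 0 ∧ b = 1) ∨ (a = 2 ∧ b = 3) ∨ (a = 0 ∧ b = 3) ∨ (a = 1 ∧ b = 3) ∨ (a = 1 ∧ b = 2)
  neg := SimpleGraph.fromRel fun a b =>
    (a = 0 ∧ b = 1) ∨ (a = 2 ∧ b = 3) ∨ (a = 0 ∧ b = 2)

namespace SignedGraph

variable {V : Type u}

/-- Condition (III): no induced subgraph of `G` is switching equivalent to the obstruction
graph `G₀`. -/
def NoInducedObstruction (G : SignedGraph V) : Prop :=
  ¬ ∃ ν : Fin 4 → Bool, G.HasInducedCopy (obstruction.switch ν)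

/-- The signed graph `G̃ = (G⁺ ∪ G⁻, G⁺ ∩ G⁻)`. -/
def tilde (G : SignedGraph V) : SignedGraph V :=
  ⟨G.pos ⊔ G.neg, G.pos ⊓ G.neg⟩

/-- The induced subgraph of a signed graph on a set of vertices. -/
def induce (G : SignedGraph V) (W : Set V) : SignedGraph W :=
  ⟨SimpleGraph.induce W G.pos, SimpleGraph.induce W G.neg⟩

/-- A vertex `v` is link simplicial: for any two edges at `v` with distinct other endpoints
there is an edge making a balanced triangle with them. -/
def LinkSimplicial (G : SignedGraph V) (v : V) : Prop :=
  ∀ (u u' : V) (s s' : Bool), u ≠ u' → G.EdgeAdj s v u → G.EdgeAdj s' v u' →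
    ∃ s'' : Bool, G.EdgeAdj s'' u u' ∧
      Even ((cond s 1 0 + cond s' 1 0 + cond s'' 1 0 : ℕ))

/-- A link elimination ordering: an enumeration of the vertices such that each vertex is
link simplicial in the induced subgraph on it and its predecessors. -/
def HasLinkElimOrdering (G : SignedGraph V) [Fintype V] : Prop :=
  ∃ e : Fin (Fintype.card V) ≃ V, ∀ i : Fin (Fintype.card V),
    (G.induce {w : V | ∃ j, j ≤ i ∧ e j = w}).LinkSimplicial ⟨e i, ⟨i, le_refl i, rfl⟩⟩

/-- A complete signed graph `K±`: any two distinct vertices are joined by a double edge. -/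
def IsCompleteSigned (G : SignedGraph V) : Prop :=
  ∀ u v : V, u ≠ v → G.pos.Adj u v ∧ G.neg.Adj u v

end SignedGraph

/-- A threshold graph: it can be built from the one-vertex graph (more generally from the
empty graph) by successively adding isolated or dominating vertices; equivalently there is
an ordering of the vertices in which each vertex is isolated or dominating among its
predecessors. -/
def SimpleGraph.IsThresholdGraph {V : Type u} [Fintype V] (G : SimpleGraph V) : Prop :=
  ∃ e : Fin (Fintype.card V) ≃ V, ∀ i : Fin (Fintype.card V),
    (∀ j, j < i → ¬ G.Adj (e i) (e j)) ∨ (∀ j, j < i → G.Adj (e i) (e j))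

/-- A simple graph is chordal if every cycle of length at least four has a chord. -/
def SimpleGraph.IsChordalGraph {V : Type u} (G : SimpleGraph V) : Prop :=
  ∀ n : ℕ, 4 ≤ n → ∀ v : ℕ → V,
    (∀ i j, i < n → j < n → v i = v j → i = j) →
    (∀ i, i < n → G.Adj (v i) (v ((i + 1) % n))) →
    ∃ i j, i < j ∧ j < n ∧ j ≠ i + 1 ∧ ¬(i = 0 ∧ j = n - 1) ∧ G.Adj (v i) (v j)

/-! ## Hyperplane arrangements -/

noncomputable section Arrangements

/-- The signed-graphic arrangement `A(G)` in `K^V`, given by its defining linear forms: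
`x i` for each vertex, `x i - x j` for positive edges and `x i + x j` for negative edges. -/
def signedArr (K : Type u) [Field K] {V : Type v} [Fintype V] (G : SignedGraph V) :
    Finset ((V → K) →ₗ[K] K) :=
  (Finset.univ.image fun i : V => LinearMap.proj i)
    ∪ ((Finset.univ.filter fun p : V × V => G.pos.Adj p.1 p.2).image fun p =>
        (LinearMap.proj p.1 : (V → K) →ₗ[K] K) - LinearMap.proj p.2)
    ∪ ((Finset.univ.filter fun p : V × V => G.neg.Adj p.1 p.2).image fun p =>
        (LinearMap.proj p.1 : (V → K) →ₗ[K] K) + LinearMap.proj p.2)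

/-- The linear polynomial in `K[x_i : i ∈ V]` corresponding to a linear form on `K^V`. -/
def linToPoly (K : Type u) [Field K] {V : Type v} [Fintype V] (φ : (V → K) →ₗ[K] K) :
    MvPolynomial V K :=
  ∑ i : V, MvPolynomial.C (φ (Pi.single i 1)) * MvPolynomial.X i

/-- The module `D(A)` of logarithmic derivations of an arrangement given by linear forms. -/
def logDerModule (K : Type u) [Field K] {V : Type v} [Fintype V]
    (A : Finset ((V → K) →ₗ[K] K)) :
    Submodule (MvPolynomial V K) (Derivation K (MvPolynomial V K) (MvPolynomial V K)) where
  carrier := {θ | ∀ φ ∈ A, θ (linToPoly K φ) ∈ Ideal.span {linToPoly K φ}}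
  add_mem' := by
    intro θ η hθ hη φ hφ
    simpa using Ideal.add_mem _ (hθ φ hφ) (hη φ hφ)
  zero_mem' := by
    intro φ hφ
    simp
  smul_mem' := by
    intro c θ hθ φ hφ
    simpa [smul_eq_mul] using Ideal.mul_mem_left _ c (hθ φ hφ)

/-- An arrangement is free if its module of logarithmic derivations is free. -/
def ArrIsFree (K : Type u) [Field K] {V : Type v} [Fintype V]
    (A : Finset ((V → K) →ₗ[K] K)) : Prop :=
  Module.Free (MvPolynomial V K) (logDerModule K A)

/-- The intersection lattice: all intersections of subfamilies of a finite family of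
subspaces (the empty intersection being the whole space). -/
def interLattice (K : Type u) [Field K] {M : Type v} [AddCommGroup M] [Module K M]
    (H : Finset (Submodule K M)) : Finset (Submodule K M) :=
  H.powerset.image fun B => B.inf id

/-- The one-variable Möbius function of the intersection lattice `L` (ordered by reverse
inclusion): `μ(whole space) = 1` and `μ(X) = -∑_{Y < X} μ(Y)`. -/
def mobiusFn (K : Type u) [Field K] {M : Type v} [AddCommGroup M] [Module K M]
    [FiniteDimensional K M] (L : Finset (Submodule K M)) (X : Submodule K M) : ℤ :=
  if X = ⊤ then 1
  else - ∑ Y ∈ (L.filter fun Y => X < Y).attach, mobiusFn K L Y.1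
termination_by Module.finrank K M - Module.finrank K X
decreasing_by
  have h1 : X < Y.1 := (Finset.mem_filter.mp Y.2).2
  have h2 : Module.finrank K X < Module.finrank K Y.1 :=
    Submodule.finrank_lt_finrank_of_lt h1
  have h3 : Module.finrank K (Y.1 : Submodule K M) ≤ Module.finrank K M :=
    Submodule.finrank_le Y.1
  omega

/-- The characteristic polynomial `χ(A,t) = ∑_{X ∈ L(A)} μ(X) t^{dim X}` of an arrangement
given by its defining linear forms. -/
def arrCharPoly (K : Type u) [Field K] {M : Type v} [AddCommGroup M] [Module K M]
    [FiniteDimensional K M] (A : Finset (M →ₗ[K] K)) : Polynomial ℤ :=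
  ∑ X ∈ interLattice K (A.image LinearMap.ker),
    Polynomial.C (mobiusFn K (interLattice K (A.image LinearMap.ker)) X) *
      Polynomial.X ^ Module.finrank K X

/-- The restriction `A^H` of the arrangement `A` to the hyperplane `H = ker φ`, given by
the restrictions of the defining forms of the hyperplanes other than `H`. -/
def restrArr (K : Type u) [Field K] {M : Type v} [AddCommGroup M] [Module K M]
    (A : Finset (M →ₗ[K] K)) (φ : M →ₗ[K] K) : Finset (↥(LinearMap.ker φ) →ₗ[K] K) :=
  (A.filter fun ψ => LinearMap.ker ψ ≠ LinearMap.ker φ).image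
    fun ψ => ψ ∘ₗ (LinearMap.ker φ).subtype

/-- Auxiliary fuelled definition of divisional freeness. -/
def DivFreeAux (K : Type u) [Field K] (n : ℕ) (M : Type v) [AddCommGroup M] [Module K M]
    [FiniteDimensional K M] (A : Finset (M →ₗ[K] K)) : Prop :=
  match n with
  | 0 => A = ∅
  | Nat.succ m => A = ∅ ∨ ∃ φ ∈ A, φ ≠ 0 ∧
      DivFreeAux K m ↥(LinearMap.ker φ) (restrArr K A φ) ∧
      arrCharPoly K (restrArr K A φ) ∣ arrCharPoly K A

/-- Divisional freeness: the empty arrangement is divisionally free, and `A` is divisionally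
free if some hyperplane `H ∈ A` has `A^H` divisionally free with `χ(A^H,t) ∣ χ(A,t)`.
(Each restriction drops the dimension by exactly one, so `finrank M` steps suffice.) -/
def ArrIsDivFree (K : Type u) [Field K] {M : Type v} [AddCommGroup M] [Module K M]
    [FiniteDimensional K M] (A : Finset (M →ₗ[K] K)) : Prop :=
  DivFreeAux K (Module.finrank K M) M A

/-- The meet of two elements in the intersection lattice ordered by reverse inclusion:
the smallest member of `L` containing both. -/
def latticeMeet (K : Type u) [Field K] {M : Type v} [AddCommGroup M] [Module K M]
    (L : Finset (Submodule K M)) (x y : Submodule K M) : Submodule K M :=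
  (L.filter fun z => x ≤ z ∧ y ≤ z).inf id

/-- `m` is a modular element of the intersection lattice `L` (ordered by reverse
inclusion): for all `a ≤ b` in `L`, `a ∨ (m ∧ b) = (a ∨ m) ∧ b`. -/
def ModularIn (K : Type u) [Field K] {M : Type v} [AddCommGroup M] [Module K M]
    (L : Finset (Submodule K M)) (m : Submodule K M) : Prop :=
  m ∈ L ∧ ∀ a ∈ L, ∀ b ∈ L, b ≤ a →
    a ⊓ latticeMeet K L m b = latticeMeet K L (a ⊓ m) b

/-- An arrangement is supersolvable if its intersection lattice has a maximal chain of
modular elements. -/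
def ArrSupersolvable (K : Type u) [Field K] {M : Type v} [AddCommGroup M] [Module K M]
    (A : Finset (M →ₗ[K] K)) : Prop :=
  ∃ C : Set (Submodule K M),
    C ⊆ ↑(interLattice K (A.image LinearMap.ker)) ∧
    IsChain (· ≤ ·) C ∧
    (∀ C' : Set (Submodule K M),
        C' ⊆ ↑(interLattice K (A.image LinearMap.ker)) → IsChain (· ≤ ·) C' → C ⊆ C' →
          C' = C) ∧
    ∀ m ∈ C, ModularIn K (interLattice K (A.image LinearMap.ker)) m

end Arrangements

/-! In `G̃` both edges at `v` are positive, so link simpliciality of `v` in `G̃` produces an edge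
`uu'` of `G`. If it does not close a balanced triangle it is a single edge of the other sign.
The edges `vu` and `vu'` are single as well: a double edge at `v` is negative in `G̃`, which
forces `uu'` to be double. The three single edges form an induced unbalanced triangle. -/

namespace SignedGraph

variable {V : Type u} {G : SignedGraph V}

lemma EdgeAdj.symm {s : Bool} {a b : V} (h : G.EdgeAdj s a b) : G.EdgeAdj s b a := by
  cases s <;> exact SimpleGraph.Adj.symm h

lemma EdgeAdj.ne {s : Bool} {a b : V} (h : G.EdgeAdj s a b) : a ≠ b := by
  cases s <;> exact SimpleGraph.Adj.ne h

lemma edgeAdj_comm {s : Bool} {a b : V} : G.EdgeAdj s a b ↔ G.EdgeAdj s b a :=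
  ⟨EdgeAdj.symm, EdgeAdj.symm⟩

lemma not_edgeAdj_self (s : Bool) (a : V) : ¬ G.EdgeAdj s a a :=
  fun h => h.ne rfl

def IsDoubleEdge (G : SignedGraph V) (a b : V) : Prop :=
  ∀ s, G.EdgeAdj s a b

def IsSingleEdge (G : SignedGraph V) (s : Bool) (a b : V) : Prop :=
  ∀ t, G.EdgeAdj t a b ↔ t = s

lemma IsDoubleEdge.symm {a b : V} (h : G.IsDoubleEdge a b) : G.IsDoubleEdge b a :=
  fun s => (h s).symm

lemma IsSingleEdge.symm {s : Bool} {a b : V} (h : G.IsSingleEdge s a b) :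
    G.IsSingleEdge s b a :=
  fun t => edgeAdj_comm.trans (h t)

lemma IsSingleEdge.edgeAdj {s : Bool} {a b : V} (h : G.IsSingleEdge s a b) :
    G.EdgeAdj s a b :=
  (h s).2 rfl

lemma isSingleEdge_of_not_isDoubleEdge {s : Bool} {a b : V} (h : G.EdgeAdj s a b)
    (hd : ¬ G.IsDoubleEdge a b) : G.IsSingleEdge s a b := by
  intro t
  refine ⟨fun ht => ?_, fun ht => ht ▸ h⟩
  by_contra hts
  exact hd fun r => by
    rcases Bool.eq_or_eq_not r s with rfl | rfl
    · exact h
    · rwa [← Bool.eq_not.mpr hts]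

lemma tilde_edgeAdj_false {a b : V} : G.tilde.EdgeAdj false a b ↔ ∃ s, G.EdgeAdj s a b := by
  simp [tilde, EdgeAdj, Bool.exists_bool]

lemma tilde_edgeAdj_true {a b : V} : G.tilde.EdgeAdj true a b ↔ G.IsDoubleEdge a b := by
  simp [tilde, EdgeAdj, IsDoubleEdge, Bool.forall_bool]

lemma even_cond_add_cond_add_cond_iff (s s' s'' : Bool) :
    Even ((cond s 1 0 + cond s' 1 0 + cond s'' 1 0 : ℕ)) ↔ s'' = xor s s' := by
  cases s <;> cases s' <;> cases s'' <;> decide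

lemma linkSimplicial_iff {v : V} :
    G.LinkSimplicial v ↔ ∀ (u u' : V) (s s' : Bool), u ≠ u' → G.EdgeAdj s v u →
      G.EdgeAdj s' v u' → G.EdgeAdj (xor s s') u u' := by
  simp only [LinkSimplicial, even_cond_add_cond_add_cond_iff, exists_eq_right]

namespace LinkSimplicial

variable {v u u' : V}

lemma exists_edgeAdj_of_tilde (h : G.tilde.LinkSimplicial v) (hne : u ≠ u') {s s' : Bool}
    (hu : G.EdgeAdj s v u) (hu' : G.EdgeAdj s' v u') :
    ∃ t, G.EdgeAdj t u u' :=
  tilde_edgeAdj_false.mp <|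
    linkSimplicial_iff.mp h u u' false false hne (tilde_edgeAdj_false.mpr ⟨s, hu⟩)
      (tilde_edgeAdj_false.mpr ⟨s', hu'⟩)

lemma isDoubleEdge_of_tilde (h : G.tilde.LinkSimplicial v) (hne : u ≠ u') {s' : Bool}
    (hu : G.IsDoubleEdge v u) (hu' : G.EdgeAdj s' v u') :
    G.IsDoubleEdge u u' :=
  tilde_edgeAdj_true.mp <|
    linkSimplicial_iff.mp h u u' true false hne (tilde_edgeAdj_true.mpr hu)
      (tilde_edgeAdj_false.mpr ⟨s', hu'⟩)

end LinkSimplicial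

def triangleVert (a b c : V) : ℕ → V
  | 0 => a
  | 1 => b
  | _ => c

def triangleSgn (s₁ s₂ s₃ : Bool) : ℕ → Bool
  | 0 => s₁
  | 1 => s₂
  | _ => s₃

variable {a b c : V} {s₁ s₂ s₃ : Bool}

def Cycle.triangle (hab : G.EdgeAdj s₁ a b) (hbc : G.EdgeAdj s₂ b c)
    (hca : G.EdgeAdj s₃ c a) : G.Cycle where
  n := 3
  three_le := le_rfl
  vert := triangleVert a b c
  inj i j hi hj hij := by
    interval_cases i <;> interval_cases j <;> first
      | rfl
      | exact absurd hij hab.ne | exact absurd hij hab.ne.symm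
      | exact absurd hij hbc.ne | exact absurd hij hbc.ne.symm
      | exact absurd hij hca.ne | exact absurd hij hca.ne.symm
  sgn := triangleSgn s₁ s₂ s₃
  adj i hi := by
    interval_cases i
    exacts [hab, hbc, hca]

lemma Cycle.triangle_balanced_iff (hab : G.EdgeAdj s₁ a b) (hbc : G.EdgeAdj s₂ b c)
    (hca : G.EdgeAdj s₃ c a) :
    (Cycle.triangle hab hbc hca).Balanced ↔ xor (xor s₁ s₂) s₃ = false := by
  change Even ((Finset.range 3).filter fun i => triangleSgn s₁ s₂ s₃ i = true).card ↔ _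
  cases s₁ <;> cases s₂ <;> cases s₃ <;> decide

lemma Cycle.triangle_isInduced (hab : G.IsSingleEdge s₁ a b) (hbc : G.IsSingleEdge s₂ b c)
    (hca : G.IsSingleEdge s₃ c a) :
    (Cycle.triangle hab.edgeAdj hbc.edgeAdj hca.edgeAdj).IsInduced := by
  intro i j hi hj t
  change i < 3 at hi
  change j < 3 at hj
  interval_cases i <;> interval_cases j <;>
    simp [Cycle.triangle, triangleVert, triangleSgn, not_edgeAdj_self, hab t, hbc t, hca t,
      hab.symm t, hbc.symm t, hca.symm t, eq_comm]

end SignedGraph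

/-- **Proposition 3.3 (second part).** If `G` has no induced subgraph isomorphic to an
unbalanced triangle, then a link-simplicial vertex of `G̃ = (G⁺ ∪ G⁻, G⁺ ∩ G⁻)` is link
simplicial in `G`. -/
theorem linkSimplicial_of_tilde {V : Type} (G : SignedGraph V)
    (htri : ¬ ∃ C : G.Cycle, C.n = 3 ∧ C.IsInduced ∧ ¬ C.Balanced)
    (v : V) (h : G.tilde.LinkSimplicial v) : G.LinkSimplicial v := by
  refine SignedGraph.linkSimplicial_iff.mpr fun u u' s s' hne hvu hvu' => ?_
  by_contra hx
  have hxd : ¬ G.IsDoubleEdge u u' := fun hd => hx (hd _)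
  obtain ⟨t, huu'⟩ := h.exists_edgeAdj_of_tilde hne hvu hvu'
  have huu's : G.IsSingleEdge t u u' := SignedGraph.isSingleEdge_of_not_isDoubleEdge huu' hxd
  have hvus : G.IsSingleEdge s v u := SignedGraph.isSingleEdge_of_not_isDoubleEdge hvu
    fun hd => hxd (h.isDoubleEdge_of_tilde hne hd hvu')
  have hvu's : G.IsSingleEdge s' v u' := SignedGraph.isSingleEdge_of_not_isDoubleEdge hvu'
    fun hd => hxd (h.isDoubleEdge_of_tilde hne.symm hd hvu).symm
  have ht : t = !(xor s s') := Bool.eq_not.mpr fun hts => hx (hts ▸ huu')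
  refine htri ⟨SignedGraph.Cycle.triangle hvus.edgeAdj huu's.edgeAdj hvu's.symm.edgeAdj, rfl,
    SignedGraph.Cycle.triangle_isInduced hvus huu's hvu's.symm, ?_⟩
  rw [SignedGraph.Cycle.triangle_balanced_iff, ht]
  cases s <;> cases s' <;> decide
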